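/- Induced pre-power structure along a surjective ring homomorphism: let φ : R₁ → R₂ be a surjective homomorphism of commutative rings and let μ₁ be a power structure on R₁ such that μ₁(1−t, r) lies in 1+t·(ker φ)[[t]] for every r ∈ ker φ (i.e., all positive-degree coefficients of μ₁(1−t, r) lie in ker φ). Then: (a) for every i ≥ 1 and every s ∈ R₂, the power series obtained by applying φ coefficientwise to μ₁(1−t^i, r) is independent of the choice of r ∈ R₁ with φ(r) = s; and (b) the resulting well-defined map μ₂(1−t^i, s) := φ(μ₁(1−t^i, r)) (any r with φ(r) = s) is a pre-power structure on R₂. -/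

import Mathlib

/-- Substitution `t ↦ t^i` on formal power series, defined coefficientwise. -/
noncomputable def substPow {R : Type*} [CommRing R] (i : ℕ) (A : PowerSeries R) :
    PowerSeries R :=
  PowerSeries.mk fun n => if i ∣ n then PowerSeries.coeff (n / i) A else 0

/-- A power structure on a commutative ring `R`: a map `(1 + t·R[[t]]) × R → 1 + t·R[[t]]`,
`(A(t), r) ↦ A(t)^r`, satisfying the seven axioms (i)-(vii).  It is encoded as a total map
`pow : R[[t]] → R → R[[t]]` whose axioms are imposed on series with constant coefficient `1`. -/
structure PowerStructure (R : Type*) [CommRing R] where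
  pow : PowerSeries R → R → PowerSeries R
  /-- `A(t)^r` again lies in `1 + t·R[[t]]`. -/
  constantCoeff_pow : ∀ A : PowerSeries R, PowerSeries.constantCoeff A = 1 →
    ∀ r : R, PowerSeries.constantCoeff (pow A r) = 1
  /-- (i) `A(t)^0 = 1`. -/
  pow_zero : ∀ A : PowerSeries R, PowerSeries.constantCoeff A = 1 → pow A 0 = 1
  /-- (ii) `A(t)^1 = A(t)`. -/
  pow_one : ∀ A : PowerSeries R, PowerSeries.constantCoeff A = 1 → pow A 1 = A
  /-- (iii) `(A(t)·B(t))^r = A(t)^r·B(t)^r`. -/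
  mul_pow : ∀ A B : PowerSeries R, PowerSeries.constantCoeff A = 1 →
    PowerSeries.constantCoeff B = 1 → ∀ r : R, pow (A * B) r = pow A r * pow B r
  /-- (iv) `A(t)^(r+s) = A(t)^r·A(t)^s`. -/
  pow_add : ∀ A : PowerSeries R, PowerSeries.constantCoeff A = 1 →
    ∀ r s : R, pow A (r + s) = pow A r * pow A s
  /-- (v) `A(t)^(r·s) = (A(t)^r)^s`. -/
  pow_mul : ∀ A : PowerSeries R, PowerSeries.constantCoeff A = 1 →
    ∀ r s : R, pow A (r * s) = pow (pow A r) s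
  /-- (vi) `(1+t)^r = 1 + r·t + o(t²)`. -/
  pow_one_add_X : ∀ r : R, PowerSeries.coeff 0 (pow (1 + PowerSeries.X) r) = 1 ∧
    PowerSeries.coeff 1 (pow (1 + PowerSeries.X) r) = r
  /-- (vii) `A(tⁱ)^r = A(t)^r|_{t ↦ tⁱ}` for all `i ≥ 1`. -/
  pow_subst : ∀ A : PowerSeries R, PowerSeries.constantCoeff A = 1 → ∀ r : R,
    ∀ i : ℕ, 1 ≤ i → pow (substPow i A) r = substPow i (pow A r)

/-- A pre-power structure on a commutative ring `R`: a map `S_R × R → 1 + t·R[[t]]` where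
`S_R = {1 − tⁱ : i ≥ 1}`, encoded as `pow : ℕ → R → R[[t]]` with `pow i r` standing for
`(1 − tⁱ)^r`, satisfying axioms (i)-(iv) of a pre-power structure. -/
structure PrePowerStructure (R : Type*) [CommRing R] where
  pow : ℕ → R → PowerSeries R
  /-- `(1 − tⁱ)^r` lies in `1 + t·R[[t]]`. -/
  constantCoeff_pow : ∀ i : ℕ, 1 ≤ i → ∀ r : R,
    PowerSeries.constantCoeff (pow i r) = 1
  /-- (i) `(1−t)⁻¹ = Σ_{i≥0} tⁱ`. -/
  pow_neg_one : pow 1 (-1) = PowerSeries.mk fun _ => (1 : R)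
  /-- (ii) `(1−t)^(−a) = 1 + a·t + o(t²)`. -/
  pow_neg : ∀ a : R, PowerSeries.coeff 0 (pow 1 (-a)) = 1 ∧
    PowerSeries.coeff 1 (pow 1 (-a)) = a
  /-- (iii) `(1−t)^(−(a+b)) = (1−t)^(−a)·(1−t)^(−b)`. -/
  pow_neg_add : ∀ a b : R, pow 1 (-(a + b)) = pow 1 (-a) * pow 1 (-b)
  /-- (iv) if `(1−t)^a = f(t)` then `(1−tⁱ)^a = f(tⁱ)` for all `i ≥ 1`. -/
  pow_subst : ∀ a : R, ∀ i : ℕ, 1 ≤ i → pow i a = substPow i (pow 1 a)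

/-!
By axiom (iv), `(1−t)^r = (1−t)^{r−r'}·(1−t)^{r'}`, and for `r − r' ∈ ker φ` the first factor maps
to `1` under `φ`; so `φ((1−t)^r)` depends only on `φ r`, and axiom (vii) carries this from `1 − t`
to `1 − tⁱ`. Hence the restriction of `μ₁` to `S_{R₁}`, which is a pre-power structure, descends
along `φ`. The one computation is `(1−t)^r = 1 − r·t + o(t²)`, read off from
`(1+t)^r·(1−t)^r = (1−t²)^r`, which has no `t`-term.
-/

open PowerSeries Function

section substPow

variable {R : Type*} [CommRing R]

theorem substPow_eq_expand {i : ℕ} (hi : i ≠ 0) (A : PowerSeries R) :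
    substPow i A = expand i hi A := by
  ext n
  simp [substPow, coeff_expand]

theorem substPow_one_sub_X {i : ℕ} (hi : 1 ≤ i) :
    substPow i (1 - X : PowerSeries R) = 1 - X ^ i := by
  rw [substPow_eq_expand (by omega), map_sub, map_one, expand_X]

theorem map_substPow {S : Type*} [CommRing S] (φ : R →+* S) (i : ℕ) (A : PowerSeries R) :
    map φ (substPow i A) = substPow i (map φ A) := by
  ext n
  simp only [substPow, coeff_map, coeff_mk]
  split <;> simp

end substPow

theorem PowerSeries.map_eq_one_of_coeff {R S : Type*} [CommRing R] [CommRing S] (φ : R →+* S)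
    {f : PowerSeries R} (h0 : φ (constantCoeff f) = 1)
    (hpos : ∀ n : ℕ, 1 ≤ n → φ (coeff n f) = 0) : map φ f = 1 := by
  ext (_ | n)
  · simpa using h0
  · simp [hpos (n + 1) (by omega), coeff_one]

namespace PowerStructure

variable {R : Type*} [CommRing R] (μ : PowerStructure R)

theorem pow_neg_one_mul {A : PowerSeries R} (hA : constantCoeff A = 1) :
    μ.pow A (-1) * A = 1 := by
  conv_lhs => rhs; rw [← μ.pow_one A hA]
  rw [← μ.pow_add A hA, neg_add_cancel, μ.pow_zero A hA]

theorem pow_one_sub_X_neg_one : μ.pow (1 - X) (-1) = PowerSeries.mk 1 :=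
  left_inv_eq_right_inv (μ.pow_neg_one_mul (by simp))
    (by rw [mul_comm, mk_one_mul_one_sub_eq_one])

theorem coeff_one_pow_one_sub_X (r : R) : coeff 1 (μ.pow (1 - X) r) = -r := by
  have hprod : μ.pow (1 + X) r * μ.pow (1 - X) r = substPow 2 (μ.pow (1 - X) r) := by
    rw [← μ.mul_pow _ _ (by simp) (by simp), ← μ.pow_subst _ (by simp) r 2 (by norm_num),
      substPow_one_sub_X (by norm_num)]
    ring_nf
  have hodd : coeff 1 (substPow 2 (μ.pow (1 - X) r)) = 0 := by simp [substPow]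
  have h := congrArg (coeff 1) hprod
  rw [hodd, coeff_one_mul, (μ.pow_one_add_X r).2, μ.constantCoeff_pow _ (by simp),
    ← coeff_zero_eq_constantCoeff_apply, (μ.pow_one_add_X r).1] at h
  linear_combination h

noncomputable def toPrePowerStructure : PrePowerStructure R where
  pow i r := μ.pow (1 - X ^ i) r
  constantCoeff_pow i hi r := μ.constantCoeff_pow _ (by simp [zero_pow (by omega : i ≠ 0)]) r
  pow_neg_one := by rw [_root_.pow_one, pow_one_sub_X_neg_one]; rfl
  pow_neg a := by
    rw [_root_.pow_one, coeff_zero_eq_constantCoeff_apply, μ.constantCoeff_pow _ (by simp),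
      coeff_one_pow_one_sub_X, neg_neg]
    exact ⟨rfl, rfl⟩
  pow_neg_add a b := by
    rw [_root_.pow_one, neg_add]
    exact μ.pow_add _ (by simp) _ _
  pow_subst a i hi := by
    rw [_root_.pow_one, ← μ.pow_subst _ (by simp) a i hi, substPow_one_sub_X hi]

@[simp]
theorem toPrePowerStructure_pow (i : ℕ) (r : R) :
    μ.toPrePowerStructure.pow i r = μ.pow (1 - X ^ i) r :=
  rfl

theorem map_pow_eq_of_map_pow_eq_one {S : Type*} [CommRing S] {φ : R →+* S}
    {A : PowerSeries R} (hA : constantCoeff A = 1)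
    (hker : ∀ k : R, φ k = 0 → map φ (μ.pow A k) = 1) {r r' : R} (h : φ r = φ r') :
    map φ (μ.pow A r) = map φ (μ.pow A r') := by
  rw [← sub_add_cancel r r', μ.pow_add A hA, map_mul,
    hker _ (by rw [map_sub, h, sub_self]), one_mul]

end PowerStructure

namespace PrePowerStructure

variable {R₁ R₂ : Type*} [CommRing R₁] [CommRing R₂] (ν : PrePowerStructure R₁)

def DescendsAlong (φ : R₁ →+* R₂) : Prop :=
  ∀ r r' : R₁, φ r = φ r' → PowerSeries.map φ (ν.pow 1 r) = PowerSeries.map φ (ν.pow 1 r')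

theorem DescendsAlong.map_pow_eq {ν : PrePowerStructure R₁} {φ : R₁ →+* R₂} (h : ν.DescendsAlong φ)
    {i : ℕ} (hi : 1 ≤ i) {r r' : R₁} (hr : φ r = φ r') :
    PowerSeries.map φ (ν.pow i r) = PowerSeries.map φ (ν.pow i r') := by
  rw [ν.pow_subst r i hi, ν.pow_subst r' i hi, map_substPow, map_substPow, h r r' hr]

noncomputable def map (φ : R₁ →+* R₂) (hφ : Surjective φ) (hν : ν.DescendsAlong φ) :
    PrePowerStructure R₂ where
  pow i s := PowerSeries.map φ (ν.pow i (surjInv hφ s))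
  constantCoeff_pow i hi s := by
    rw [← coeff_zero_eq_constantCoeff_apply, coeff_map, coeff_zero_eq_constantCoeff_apply,
      ν.constantCoeff_pow i hi, map_one]
  pow_neg_one := by
    rw [hν _ (-1) (by rw [surjInv_eq hφ, map_neg, map_one]), ν.pow_neg_one]
    ext n
    simp
  pow_neg a := by
    rw [coeff_map, coeff_map, ← neg_neg (surjInv hφ (-a)), (ν.pow_neg _).1, (ν.pow_neg _).2,
      map_one, map_neg, surjInv_eq hφ, neg_neg]
    exact ⟨rfl, rfl⟩
  pow_neg_add a b := by
    calc PowerSeries.map φ (ν.pow 1 (surjInv hφ (-(a + b))))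
        = PowerSeries.map φ (ν.pow 1 (-(-surjInv hφ (-a) + -surjInv hφ (-b)))) :=
          hν _ _ (by simp [surjInv_eq])
      _ = PowerSeries.map φ (ν.pow 1 (surjInv hφ (-a)))
          * PowerSeries.map φ (ν.pow 1 (surjInv hφ (-b))) := by
          rw [ν.pow_neg_add, map_mul, neg_neg, neg_neg]
  pow_subst a i hi := by
    rw [ν.pow_subst _ i hi, map_substPow]

theorem map_pow {φ : R₁ →+* R₂} (hφ : Surjective φ) (hν : ν.DescendsAlong φ) {i : ℕ} (hi : 1 ≤ i)
    (r : R₁) :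
    (ν.map φ hφ hν).pow i (φ r) = PowerSeries.map φ (ν.pow i r) :=
  hν.map_pow_eq hi (surjInv_eq hφ _)

end PrePowerStructure

/-- Induced pre-power structure along a surjective ring homomorphism `φ : R₁ → R₂`.
Assume `μ₁` is a power structure on `R₁` such that `μ₁(1−t, r) ∈ 1 + t·(ker φ)[[t]]` for
every `r ∈ ker φ`.  Then (a) for `i ≥ 1` and `s ∈ R₂`, the coefficientwise image under `φ`
of `μ₁(1−tⁱ, r)` does not depend on the choice of `r` with `φ(r) = s`; and (b) the
well-defined map `μ₂(1−tⁱ, s) := φ(μ₁(1−tⁱ, r))` is a pre-power structure on `R₂`. -/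
theorem induced_prePowerStructure_of_surjective {R₁ R₂ : Type*} [CommRing R₁] [CommRing R₂]
    (φ : R₁ →+* R₂) (hφ : Function.Surjective φ) (μ₁ : PowerStructure R₁)
    (hker : ∀ r : R₁, φ r = 0 → ∀ n : ℕ, 1 ≤ n →
      φ (PowerSeries.coeff n (μ₁.pow (1 - PowerSeries.X) r)) = 0) :
    (∀ i : ℕ, 1 ≤ i → ∀ r r' : R₁, φ r = φ r' →
        PowerSeries.map φ (μ₁.pow (1 - PowerSeries.X ^ i) r)
          = PowerSeries.map φ (μ₁.pow (1 - PowerSeries.X ^ i) r')) ∧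
    (∃ ν : PrePowerStructure R₂, ∀ (i : ℕ), 1 ≤ i → ∀ r : R₁,
        ν.pow i (φ r) = PowerSeries.map φ (μ₁.pow (1 - PowerSeries.X ^ i) r)) := by
  have hB : constantCoeff (1 - X : PowerSeries R₁) = 1 := by simp
  have hker_one : ∀ k : R₁, φ k = 0 → map φ (μ₁.pow (1 - X) k) = 1 := fun k hk =>
    map_eq_one_of_coeff φ (by rw [μ₁.constantCoeff_pow _ hB, map_one]) (hker k hk)
  have hdesc : μ₁.toPrePowerStructure.DescendsAlong φ := fun r r' h => by
    simpa using μ₁.map_pow_eq_of_map_pow_eq_one hB hker_one h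
  exact ⟨fun i hi r r' h => hdesc.map_pow_eq hi h, μ₁.toPrePowerStructure.map φ hφ hdesc,
    fun i hi r => μ₁.toPrePowerStructure.map_pow hφ hdesc hi r⟩
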